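/- arXiv:2411.01869 — 6 statements merged into one kernel-verified Lean document; each statement's English description precedes it below -/
import Mathlib

section
/- Let R be a commutative noetherian ring equipped with a Z-grading, and let A be an R-Hopf algebra which is flat as an R-module and carries a Z-grading compatible with that of R, for which all structure maps (multiplication, unit, comultiplication, counit, antipode) are homogeneous of degree 0. Let M and M' be Z-graded A-comodules which are finitely generated as R-modules. Then the map ⊕_{n∈Z} Hom_{graded A-comod}(M, M'(n)) → Hom_{A-comod}(M, M') induced by forgetting the gradings is an isomorphism of abelian groups. -/
open TensorProduct

section Defs

variable (R : Type*) [CommRing R]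

/-- `ρ : M →ₗ[R] M ⊗[R] A` is a comodule coaction over the coalgebra `A` if it is
coassociative and counital. -/
def IsComoduleCoaction {A : Type*} [AddCommMonoid A] [Module R A] [CoalgebraStruct R A]
    {M : Type*} [AddCommMonoid M] [Module R M] (ρ : M →ₗ[R] M ⊗[R] A) : Prop :=
  ((TensorProduct.assoc R M A A).toLinearMap.comp
      ((TensorProduct.map ρ (LinearMap.id : A →ₗ[R] A)).comp ρ) =
    (TensorProduct.map (LinearMap.id : M →ₗ[R] M) (Coalgebra.comul (R := R))).comp ρ) ∧
  ((TensorProduct.rid R M).toLinearMap.comp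
      ((TensorProduct.map (LinearMap.id : M →ₗ[R] M) (Coalgebra.counit (R := R))).comp ρ) =
    LinearMap.id)

/-- A linear map `f : M →ₗ[R] N` is a morphism of comodules (for coactions `ρM`, `ρN`)
if `(f ⊗ id) ∘ ρM = ρN ∘ f`. -/
def IsComodMap {A M N : Type*} [AddCommMonoid A] [Module R A]
    [AddCommMonoid M] [Module R M] [AddCommMonoid N] [Module R N]
    (ρM : M →ₗ[R] M ⊗[R] A) (ρN : N →ₗ[R] N ⊗[R] A) (f : M →ₗ[R] N) : Prop :=
  (TensorProduct.map f (LinearMap.id : A →ₗ[R] A)).comp ρM = ρN.comp f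

/-- The additive subgroup of `M ⊗[R] A` generated by the pure tensors `x ⊗ y` with
`x ∈ P` and `y ∈ Q`: the `(P, Q)`-graded piece of a tensor product of graded modules. -/
noncomputable def tensorPiece {M A : Type*} [AddCommGroup M] [Module R M] [AddCommGroup A] [Module R A]
    (P : AddSubgroup M) (Q : AddSubgroup A) : AddSubgroup (M ⊗[R] A) :=
  AddSubgroup.closure {z : M ⊗[R] A | ∃ x ∈ P, ∃ y ∈ Q, z = x ⊗ₜ[R] y}

/-- The additive group of comodule morphisms `M → M'` that are homogeneous of degree `n`
for gradings `ℳ`, `ℳ'`; equivalently, degree-`0` morphisms of graded comodules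
`M → M'(n)` where `(n)` denotes the grading shift. -/
noncomputable def homogComodHom {A M M' : Type*} [AddCommGroup A] [Module R A]
    [AddCommGroup M] [Module R M] [AddCommGroup M'] [Module R M']
    (ρM : M →ₗ[R] M ⊗[R] A) (ρM' : M' →ₗ[R] M' ⊗[R] A)
    (ℳ : ℤ → AddSubgroup M) (ℳ' : ℤ → AddSubgroup M') (n : ℤ) :
    AddSubgroup (M →ₗ[R] M') where
  carrier := {f | IsComodMap R ρM ρM' f ∧ ∀ i : ℤ, ∀ x ∈ ℳ i, f x ∈ ℳ' (i + n)}
  zero_mem' := by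
    constructor
    · show (TensorProduct.map 0 (LinearMap.id : A →ₗ[R] A)).comp ρM = ρM'.comp 0
      rw [TensorProduct.map_zero_left]
      simp
    · intro i x _
      exact (ℳ' (i + n)).zero_mem
  add_mem' := fun {f g} hf hg => by
    constructor
    · show (TensorProduct.map (f + g) (LinearMap.id : A →ₗ[R] A)).comp ρM = ρM'.comp (f + g)
      rw [TensorProduct.map_add_left, LinearMap.add_comp, hf.1, hg.1, LinearMap.comp_add]
    · intro i x hx
      exact (ℳ' (i + n)).add_mem (hf.2 i x hx) (hg.2 i x hx)
  neg_mem' := fun {f} hf => by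
    constructor
    · show (TensorProduct.map (-f) (LinearMap.id : A →ₗ[R] A)).comp ρM = ρM'.comp (-f)
      rw [show -f = (-1 : R) • f from (neg_one_smul R f).symm,
        TensorProduct.map_smul_left, LinearMap.smul_comp, hf.1, LinearMap.comp_smul]
    · intro i x hx
      exact (ℳ' (i + n)).neg_mem (hf.2 i x hx)

end Defs

/-!
For `x` of degree `i`, let `fₙ x` be the degree-`(i + n)` part of `f x`; this defines the
homogeneous components `fₙ` of a linear map `f : M → M'`, and `f = ∑ₙ fₙ` is a finite sum because
`M` is finitely generated. Forgetting the grading is injective because the summand of degree `n`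
of a finite sum of homogeneous maps is recovered as its `n`-th component. For surjectivity,
`M' ⊗[R] A` has degree projections `x ⊗ y ↦ x_{k - j} ⊗ y` (`y` of degree `j`), well defined
because `R` acts homogeneously on both factors. If `f` is a comodule map, projecting
`(f ⊗ id) (ρ x) = ρ' (f x)` onto degree `i + n` gives `(fₙ ⊗ id) (ρ x) = ρ' (fₙ x)`, since both
coactions preserve degrees; so every `fₙ` is a comodule map.
-/

open DirectSum

section GradedProj

variable {M : Type*} [AddCommGroup M] (ℳ : ℤ → AddSubgroup M) [Decomposition ℳ]

noncomputable def gradedProj (i : ℤ) : M →+ M :=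
  (ℳ i).subtype.comp ((DFinsupp.evalAddMonoidHom i).comp (decomposeAddEquiv ℳ).toAddMonoidHom)

theorem gradedProj_apply (i : ℤ) (x : M) : gradedProj ℳ i x = decompose ℳ x i := rfl

theorem gradedProj_mem (i : ℤ) (x : M) : gradedProj ℳ i x ∈ ℳ i :=
  SetLike.coe_mem _

variable {ℳ}

theorem gradedProj_of_mem_same {i : ℤ} {x : M} (hx : x ∈ ℳ i) : gradedProj ℳ i x = x :=
  decompose_of_mem_same ℳ hx

theorem gradedProj_of_mem_ne {i j : ℤ} {x : M} (hx : x ∈ ℳ i) (hij : i ≠ j) :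
    gradedProj ℳ j x = 0 :=
  decompose_of_mem_ne ℳ hx hij

theorem gradedProj_of_mem {i j : ℤ} {x : M} (hx : x ∈ ℳ i) :
    gradedProj ℳ j x = if i = j then x else 0 := by
  split_ifs with h
  · exact gradedProj_of_mem_same (h ▸ hx)
  · exact gradedProj_of_mem_ne hx h

theorem sum_gradedProj_add_eq_self (i : ℤ) (y : M) {S : Finset ℤ}
    (hS : ∀ j, gradedProj ℳ j y ≠ 0 → j - i ∈ S) :
    ∑ n ∈ S, gradedProj ℳ (i + n) y = y := by
  classical
  have hsupp : (decompose ℳ y).support ⊆ S.map (addLeftEmbedding i) := fun j hj =>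
    Finset.mem_map.mpr ⟨j - i, hS j (by simpa [gradedProj_apply] using hj), by simp⟩
  change ∑ n ∈ S, gradedProj ℳ (addLeftEmbedding i n) y = y
  rw [← Finset.sum_map S (addLeftEmbedding i) (fun j => gradedProj ℳ j y),
    ← Finset.sum_subset hsupp fun j _ hj => by simpa [gradedProj_apply] using hj]
  exact sum_support_decompose ℳ y

variable {R : Type*} [Ring R] [Module R M] {𝒜 : ℤ → AddSubgroup R} [SetLike.GradedSMul 𝒜 ℳ]

theorem gradedProj_smul_of_mem {d : ℤ} {r : R} (hr : r ∈ 𝒜 d) (i : ℤ) (y : M) :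
    gradedProj ℳ (d + i) (r • y) = r • gradedProj ℳ i y := by
  induction y using Decomposition.inductionOn ℳ with
  | zero => simp
  | @homogeneous j x =>
    have hrx : r • (x : M) ∈ ℳ (d + j) := SetLike.GradedSMul.smul_mem hr x.2
    rw [gradedProj_of_mem hrx, gradedProj_of_mem x.2]
    split_ifs <;> first | omega | simp
  | add y y' hy hy' => rw [smul_add, map_add, map_add, hy, hy', smul_add]

end GradedProj

section Ext

variable {X Y P : Type*} [AddCommGroup X] [AddCommGroup Y] [AddCommMonoid P]
  {𝒳 : ℤ → AddSubgroup X} [Decomposition 𝒳] {𝒴 : ℤ → AddSubgroup Y} [Decomposition 𝒴]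

theorem DirectSum.Decomposition.addMonoidHom_ext₂ {φ ψ : X →+ Y →+ P}
    (h : ∀ i j, ∀ x ∈ 𝒳 i, ∀ y ∈ 𝒴 j, φ x y = ψ x y) : φ = ψ := by
  ext x y
  induction x using Decomposition.inductionOn 𝒳 with
  | zero => simp
  | @homogeneous i x =>
    induction y using Decomposition.inductionOn 𝒴 with
    | zero => simp
    | @homogeneous j y => exact h i j x x.2 y y.2
    | add y y' hy hy' => rw [map_add, map_add, hy, hy']
  | add x x' hx hx' =>
    rw [map_add, map_add, AddMonoidHom.add_apply, AddMonoidHom.add_apply, hx, hx']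

end Ext

section HomogComponent

variable {R : Type*} [Ring R] {M M' : Type*} [AddCommGroup M] [Module R M] [AddCommGroup M']
  [Module R M'] (ℳ : ℤ → AddSubgroup M) (ℳ' : ℤ → AddSubgroup M')

def IsOfDegree (n : ℤ) (f : M →ₗ[R] M') : Prop :=
  ∀ i, ∀ x ∈ ℳ i, f x ∈ ℳ' (i + n)

variable [Decomposition ℳ] [Decomposition ℳ']

noncomputable def AddMonoidHom.homogComponent (n : ℤ) (f : M →+ M') : M →+ M' :=
  (toAddMonoid fun i => (gradedProj ℳ' (i + n)).comp (f.comp (ℳ i).subtype)).comp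
    (decomposeAddEquiv ℳ).toAddMonoidHom

variable {ℳ ℳ'}

theorem AddMonoidHom.homogComponent_of_mem (n : ℤ) (f : M →+ M') {i : ℤ} {x : M}
    (hx : x ∈ ℳ i) : f.homogComponent ℳ ℳ' n x = gradedProj ℳ' (i + n) (f x) := by
  change toAddMonoid _ (decompose ℳ x) = _
  rw [decompose_of_mem ℳ hx, toAddMonoid_of]
  rfl

theorem AddMonoidHom.homogComponent_map_smul (𝒜 : ℤ → AddSubgroup R) [Decomposition 𝒜]
    [SetLike.GradedSMul 𝒜 ℳ] [SetLike.GradedSMul 𝒜 ℳ'] (n : ℤ) (f : M →ₗ[R] M') (r : R) (x : M) :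
    f.toAddMonoidHom.homogComponent ℳ ℳ' n (r • x) =
      r • f.toAddMonoidHom.homogComponent ℳ ℳ' n x := by
  set g := f.toAddMonoidHom.homogComponent ℳ ℳ' n
  suffices (smulAddHom R M).compr₂ g = (smulAddHom R M').compl₂ g from
    DFunLike.congr_fun (DFunLike.congr_fun this r) x
  refine Decomposition.addMonoidHom_ext₂ (𝒳 := 𝒜) (𝒴 := ℳ) fun d i r hr x hx => ?_
  have hrx : r • x ∈ ℳ (d + i) := SetLike.GradedSMul.smul_mem hr hx
  simp only [AddMonoidHom.compr₂_apply, AddMonoidHom.compl₂_apply, smulAddHom_apply, g]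
  rw [homogComponent_of_mem n _ hrx, homogComponent_of_mem n _ hx, add_assoc,
    ← gradedProj_smul_of_mem hr]
  exact congrArg _ (f.map_smul r x)

end HomogComponent

section LinearHomogComponent

variable {R : Type*} [Ring R] (𝒜 : ℤ → AddSubgroup R) [Decomposition 𝒜]
  {M M' : Type*} [AddCommGroup M] [Module R M] [AddCommGroup M'] [Module R M']
  (ℳ : ℤ → AddSubgroup M) [Decomposition ℳ] (ℳ' : ℤ → AddSubgroup M') [Decomposition ℳ']
  [SetLike.GradedSMul 𝒜 ℳ] [SetLike.GradedSMul 𝒜 ℳ']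

noncomputable def LinearMap.homogComponent (n : ℤ) (f : M →ₗ[R] M') : M →ₗ[R] M' where
  toAddHom := (f.toAddMonoidHom.homogComponent ℳ ℳ' n).toAddHom
  map_smul' := AddMonoidHom.homogComponent_map_smul 𝒜 n f

variable {𝒜 ℳ ℳ'}

theorem LinearMap.homogComponent_of_mem (n : ℤ) (f : M →ₗ[R] M') {i : ℤ} {x : M}
    (hx : x ∈ ℳ i) : f.homogComponent 𝒜 ℳ ℳ' n x = gradedProj ℳ' (i + n) (f x) :=
  f.toAddMonoidHom.homogComponent_of_mem n hx

theorem LinearMap.isOfDegree_homogComponent (n : ℤ) (f : M →ₗ[R] M') :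
    IsOfDegree ℳ ℳ' n (f.homogComponent 𝒜 ℳ ℳ' n) := fun i x hx => by
  rw [f.homogComponent_of_mem n hx]
  exact gradedProj_mem ℳ' _ _

end LinearHomogComponent

section FiniteSupport

variable {R : Type*} [Ring R] {𝒜 : ℤ → AddSubgroup R} [Decomposition 𝒜]
  {M M' : Type*} [AddCommGroup M] [Module R M] [AddCommGroup M'] [Module R M']
  {ℳ : ℤ → AddSubgroup M} [Decomposition ℳ] {ℳ' : ℤ → AddSubgroup M'} [Decomposition ℳ']
  [SetLike.GradedSMul 𝒜 ℳ] [SetLike.GradedSMul 𝒜 ℳ']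

theorem LinearMap.exists_finset_sum_homogComponent_apply_eq (f : M →ₗ[R] M') (x : M) :
    ∃ T : Finset ℤ, ∀ S, T ⊆ S → ∑ n ∈ S, f.homogComponent 𝒜 ℳ ℳ' n x = f x := by
  classical
  induction x using Decomposition.inductionOn ℳ with
  | zero => exact ⟨∅, fun S _ => by simp⟩
  | @homogeneous i x =>
    refine ⟨(decompose ℳ' (f x)).support.image (· - i), fun S hS => ?_⟩
    simp_rw [f.homogComponent_of_mem _ x.2]
    refine sum_gradedProj_add_eq_self i _ fun j hj => hS (Finset.mem_image.mpr ⟨j, ?_, rfl⟩)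
    simpa [gradedProj_apply] using hj
  | add x y hx hy =>
    obtain ⟨T, hT⟩ := hx
    obtain ⟨T', hT'⟩ := hy
    refine ⟨T ∪ T', fun S hS => ?_⟩
    simp only [map_add, Finset.sum_add_distrib]
    rw [hT S (Finset.union_subset_left hS), hT' S (Finset.union_subset_right hS)]

theorem LinearMap.exists_finset_sum_homogComponent_eq [Module.Finite R M] (f : M →ₗ[R] M') :
    ∃ S : Finset ℤ, ∑ n ∈ S, f.homogComponent 𝒜 ℳ ℳ' n = f := by
  obtain ⟨t, ht⟩ := Module.Finite.fg_top (R := R) (M := M)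
  choose T hT using f.exists_finset_sum_homogComponent_apply_eq (𝒜 := 𝒜) (ℳ := ℳ) (ℳ' := ℳ')
  refine ⟨t.biUnion T, LinearMap.ext_on ht fun x hx => ?_⟩
  rw [LinearMap.sum_apply]
  exact hT x _ (Finset.subset_biUnion_of_mem T hx)

end FiniteSupport

section Injective

variable {R : Type*} [Ring R] {M M' : Type*} [AddCommGroup M] [Module R M] [AddCommGroup M']
  [Module R M'] {ℳ : ℤ → AddSubgroup M} {ℳ' : ℤ → AddSubgroup M'}
  [Decomposition ℳ'] {H : ℤ → AddSubgroup (M →ₗ[R] M')}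

theorem gradedProj_toAddMonoid_subtype_apply (hH : ∀ n, ∀ f ∈ H n, IsOfDegree ℳ ℳ' n f)
    (c : ⨁ n, H n) (n : ℤ) {i : ℤ} {x : M} (hx : x ∈ ℳ i) :
    gradedProj ℳ' (i + n) (toAddMonoid (fun n => (H n).subtype) c x) = (c n : M →ₗ[R] M') x := by
  induction c using DirectSum.induction_on with
  | zero => simp
  | of m f =>
    rw [toAddMonoid_of, AddSubgroup.subtype_apply, gradedProj_of_mem (hH m f f.2 i x hx)]
    by_cases hmn : m = n
    · subst hmn
      simp
    · rw [if_neg (by omega), of_eq_of_ne _ _ _ (Ne.symm hmn)]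
      simp
  | add c c' hc hc' =>
    simp only [map_add, LinearMap.add_apply, hc, hc', DirectSum.add_apply, AddSubgroup.coe_add]

theorem injective_toAddMonoid_subtype_of_isOfDegree [Decomposition ℳ]
    (hH : ∀ n, ∀ f ∈ H n, IsOfDegree ℳ ℳ' n f) :
    Function.Injective (toAddMonoid fun n => (H n).subtype) := by
  refine (injective_iff_map_eq_zero _).mpr fun c hc => DFinsupp.ext fun n => ?_
  refine Subtype.ext (LinearMap.ext fun x => ?_)
  induction x using Decomposition.inductionOn ℳ with
  | zero => simp
  | @homogeneous i x =>
    rw [← gradedProj_toAddMonoid_subtype_apply hH c n x.2, hc]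
    simp
  | add x y hx hy => simp only [map_add, hx, hy]

end Injective

section TensorGrading

variable (R : Type*) [CommRing R] {M A : Type*} [AddCommGroup M] [Module R M] [AddCommGroup A]
  [Module R A] (ℳ : ℤ → AddSubgroup M) (ℬ : ℤ → AddSubgroup A)

noncomputable def tensorGrading (k : ℤ) : AddSubgroup (M ⊗[R] A) :=
  ⨆ p : ℤ × ℤ, ⨆ _ : p.1 + p.2 = k, tensorPiece R (ℳ p.1) (ℬ p.2)

variable {R ℳ ℬ}

theorem tensorGrading_le {k : ℤ} {G : AddSubgroup (M ⊗[R] A)}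
    (h : ∀ i j, i + j = k → ∀ x ∈ ℳ i, ∀ y ∈ ℬ j, x ⊗ₜ[R] y ∈ G) :
    tensorGrading R ℳ ℬ k ≤ G :=
  iSup_le fun p => iSup_le fun hp => (AddSubgroup.closure_le G).mpr <| by
    rintro _ ⟨x, hx, y, hy, rfl⟩
    exact h p.1 p.2 hp x hx y hy

variable (R ℳ ℬ)

def IsGradedCoaction (ρ : M →ₗ[R] M ⊗[R] A) : Prop :=
  ∀ n, ∀ x ∈ ℳ n, ρ x ∈ tensorGrading R ℳ ℬ n

end TensorGrading

section TensorProjAux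

variable (R : Type*) [CommRing R] {M A : Type*} [AddCommGroup M] [Module R M] [AddCommGroup A]
  [Module R A] (ℳ : ℤ → AddSubgroup M) [Decomposition ℳ] (ℬ : ℤ → AddSubgroup A) [Decomposition ℬ]

noncomputable def tensorProjAux (k : ℤ) : A →+ M →+ M ⊗[R] A :=
  (toAddMonoid fun j => AddMonoidHom.mk'
      (fun y : ℬ j =>
        ((TensorProduct.mk R M A).flip y).toAddMonoidHom.comp (gradedProj ℳ (k - j)))
      fun y y' => by ext; simp).comp
    (decomposeAddEquiv ℬ).toAddMonoidHom

variable {R ℳ ℬ}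

theorem tensorProjAux_of_mem (k : ℤ) {j : ℤ} {y : A} (hy : y ∈ ℬ j) (x : M) :
    tensorProjAux R ℳ ℬ k y x = gradedProj ℳ (k - j) x ⊗ₜ[R] y := by
  have hdec : (decomposeAddEquiv ℬ).toAddMonoidHom y = of (fun j => ℬ j) j ⟨y, hy⟩ :=
    decompose_of_mem ℬ hy
  simp only [tensorProjAux, AddMonoidHom.comp_apply, hdec, toAddMonoid_of]
  rfl

theorem tensorProjAux_smul (𝒜 : ℤ → AddSubgroup R) [Decomposition 𝒜] [SetLike.GradedSMul 𝒜 ℳ]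
    [SetLike.GradedSMul 𝒜 ℬ] (k : ℤ) (r : R) (x : M) (y : A) :
    tensorProjAux R ℳ ℬ k y (r • x) = tensorProjAux R ℳ ℬ k (r • y) x := by
  set T := tensorProjAux R ℳ ℬ k
  suffices T.flip.comp ((smulAddHom R M).flip x) = (smulAddHom R A).compr₂ (T.flip x) from
    DFunLike.congr_fun (DFunLike.congr_fun this r) y
  refine Decomposition.addMonoidHom_ext₂ (𝒳 := 𝒜) (𝒴 := ℬ) fun d j r hr y hy => ?_
  have hry : r • y ∈ ℬ (d + j) := SetLike.GradedSMul.smul_mem hr hy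
  simp only [AddMonoidHom.comp_apply, AddMonoidHom.flip_apply, AddMonoidHom.compr₂_apply,
    smulAddHom_apply, T]
  rw [tensorProjAux_of_mem k hy, tensorProjAux_of_mem k hry, ← TensorProduct.smul_tmul,
    ← gradedProj_smul_of_mem hr, show d + (k - (d + j)) = k - j by omega]

end TensorProjAux

section TensorProj

variable {R : Type*} [CommRing R] (𝒜 : ℤ → AddSubgroup R) [Decomposition 𝒜]
  {M A : Type*} [AddCommGroup M] [Module R M] [AddCommGroup A] [Module R A]
  (ℳ : ℤ → AddSubgroup M) [Decomposition ℳ] (ℬ : ℤ → AddSubgroup A) [Decomposition ℬ]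
  [SetLike.GradedSMul 𝒜 ℳ] [SetLike.GradedSMul 𝒜 ℬ]

noncomputable def tensorProj (k : ℤ) : M ⊗[R] A →+ M ⊗[R] A :=
  TensorProduct.liftAddHom (tensorProjAux R ℳ ℬ k).flip fun r x y => tensorProjAux_smul 𝒜 k r x y

variable {𝒜 ℳ ℬ}

theorem tensorProj_tmul (k : ℤ) {j : ℤ} (x : M) {y : A} (hy : y ∈ ℬ j) :
    tensorProj 𝒜 ℳ ℬ k (x ⊗ₜ[R] y) = gradedProj ℳ (k - j) x ⊗ₜ[R] y :=
  (TensorProduct.liftAddHom_tmul _ _ _ _).trans (tensorProjAux_of_mem k hy x)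

theorem tensorProj_of_mem {l k : ℤ} {z : M ⊗[R] A} (hz : z ∈ tensorGrading R ℳ ℬ l) :
    tensorProj 𝒜 ℳ ℬ k z = if l = k then z else 0 := by
  split_ifs with h
  · subst h
    refine tensorGrading_le (G := (tensorProj 𝒜 ℳ ℬ l).eqLocus (AddMonoidHom.id _))
      (fun i j hij x hx y hy => ?_) hz
    change tensorProj 𝒜 ℳ ℬ l (x ⊗ₜ[R] y) = x ⊗ₜ[R] y
    rw [tensorProj_tmul l x hy, gradedProj_of_mem_same (by rwa [← hij, add_sub_cancel_right])]
  · refine tensorGrading_le (G := (tensorProj 𝒜 ℳ ℬ k).ker) (fun i j hij x hx y hy => ?_) hz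
    rw [AddMonoidHom.mem_ker, tensorProj_tmul k x hy, gradedProj_of_mem_ne hx (by omega),
      TensorProduct.zero_tmul]

theorem IsGradedCoaction.tensorProj_apply {ρ : M →ₗ[R] M ⊗[R] A}
    (hρ : IsGradedCoaction R ℳ ℬ ρ) (k : ℤ) (x : M) :
    tensorProj 𝒜 ℳ ℬ k (ρ x) = ρ (gradedProj ℳ k x) := by
  induction x using Decomposition.inductionOn ℳ with
  | zero => simp
  | @homogeneous i x =>
    rw [tensorProj_of_mem (hρ i x x.2), gradedProj_of_mem x.2]
    split_ifs <;> simp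
  | add x y hx hy => rw [map_add, map_add, hx, hy, map_add, map_add]

end TensorProj

section ComodHom

variable {R : Type*} [CommRing R] {A M M' : Type*} [AddCommGroup A] [Module R A]
  [AddCommGroup M] [Module R M] [AddCommGroup M'] [Module R M']
  {ρ : M →ₗ[R] M ⊗[R] A} {ρ' : M' →ₗ[R] M' ⊗[R] A}

theorem isComodMap_zero : IsComodMap R ρ ρ' 0 := by
  rw [IsComodMap, TensorProduct.map_zero_left, LinearMap.zero_comp, LinearMap.comp_zero]

theorem IsComodMap.add {f g : M →ₗ[R] M'} (hf : IsComodMap R ρ ρ' f)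
    (hg : IsComodMap R ρ ρ' g) : IsComodMap R ρ ρ' (f + g) := by
  rw [IsComodMap, TensorProduct.map_add_left, LinearMap.add_comp, hf, hg, LinearMap.comp_add]

variable {𝒜 : ℤ → AddSubgroup R} [Decomposition 𝒜]
  {ℳ : ℤ → AddSubgroup M} [Decomposition ℳ] {ℳ' : ℤ → AddSubgroup M'} [Decomposition ℳ']
  {ℬ : ℤ → AddSubgroup A} [Decomposition ℬ]
  [SetLike.GradedSMul 𝒜 ℳ] [SetLike.GradedSMul 𝒜 ℳ'] [SetLike.GradedSMul 𝒜 ℬ]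

theorem tensorProj_map_of_mem_tensorGrading (n : ℤ) (f : M →ₗ[R] M') {i : ℤ}
    {z : M ⊗[R] A} (hz : z ∈ tensorGrading R ℳ ℬ i) :
    tensorProj 𝒜 ℳ' ℬ (i + n) (TensorProduct.map f LinearMap.id z) =
      TensorProduct.map (f.homogComponent 𝒜 ℳ ℳ' n) LinearMap.id z := by
  refine tensorGrading_le (G := ((tensorProj 𝒜 ℳ' ℬ (i + n)).comp
      (TensorProduct.map f LinearMap.id).toAddMonoidHom).eqLocus
      (TensorProduct.map (f.homogComponent 𝒜 ℳ ℳ' n) LinearMap.id).toAddMonoidHom)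
    (fun p q hpq x hx y hy => ?_) hz
  change tensorProj 𝒜 ℳ' ℬ (i + n) (TensorProduct.map f LinearMap.id (x ⊗ₜ[R] y)) =
    TensorProduct.map (f.homogComponent 𝒜 ℳ ℳ' n) LinearMap.id (x ⊗ₜ[R] y)
  rw [TensorProduct.map_tmul, TensorProduct.map_tmul, LinearMap.id_apply, tensorProj_tmul _ _ hy,
    f.homogComponent_of_mem n hx, show i + n - q = p + n by omega]

theorem IsComodMap.homogComponent (hρ : IsGradedCoaction R ℳ ℬ ρ)
    (hρ' : IsGradedCoaction R ℳ' ℬ ρ') {f : M →ₗ[R] M'} (hf : IsComodMap R ρ ρ' f) (n : ℤ) :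
    IsComodMap R ρ ρ' (f.homogComponent 𝒜 ℳ ℳ' n) := by
  refine LinearMap.ext fun x => ?_
  simp only [LinearMap.comp_apply]
  induction x using Decomposition.inductionOn ℳ with
  | zero => simp
  | @homogeneous i x =>
    calc TensorProduct.map (f.homogComponent 𝒜 ℳ ℳ' n) LinearMap.id (ρ x)
        = tensorProj 𝒜 ℳ' ℬ (i + n) (TensorProduct.map f LinearMap.id (ρ x)) :=
          (tensorProj_map_of_mem_tensorGrading n f (hρ i x x.2)).symm
      _ = tensorProj 𝒜 ℳ' ℬ (i + n) (ρ' (f x)) := by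
          rw [← LinearMap.comp_apply (TensorProduct.map f LinearMap.id), hf, LinearMap.comp_apply]
      _ = ρ' (f.homogComponent 𝒜 ℳ ℳ' n x) := by
          rw [hρ'.tensorProj_apply, f.homogComponent_of_mem n x.2]
  | add x y hx hy => rw [map_add, map_add, hx, hy, map_add, map_add]

end ComodHom

theorem forget_grading_comodHom_bijective_general
    {R : Type*} [CommRing R]
    (𝒜 : ℤ → AddSubgroup R) [GradedRing 𝒜]
    {A : Type*} [Ring A] [HopfAlgebra R A]
    (ℬ : ℤ → AddSubgroup A) [DirectSum.Decomposition ℬ]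
    (hAsmul : ∀ (i j : ℤ) (r : R) (a : A), r ∈ 𝒜 i → a ∈ ℬ j → r • a ∈ ℬ (i + j))
    {M : Type*} [AddCommGroup M] [Module R M] [Module.Finite R M]
    {M' : Type*} [AddCommGroup M'] [Module R M']
    (ρM : M →ₗ[R] M ⊗[R] A) (ρM' : M' →ₗ[R] M' ⊗[R] A)
    (ℳ : ℤ → AddSubgroup M) [DirectSum.Decomposition ℳ]
    (ℳ' : ℤ → AddSubgroup M') [DirectSum.Decomposition ℳ']
    (hMsmul : ∀ (i j : ℤ) (r : R) (x : M), r ∈ 𝒜 i → x ∈ ℳ j → r • x ∈ ℳ (i + j))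
    (hM'smul : ∀ (i j : ℤ) (r : R) (x : M'), r ∈ 𝒜 i → x ∈ ℳ' j → r • x ∈ ℳ' (i + j))
    (hMcoact : ∀ n : ℤ, ∀ x ∈ ℳ n, ρM x ∈
      ⨆ p : ℤ × ℤ, ⨆ _ : p.1 + p.2 = n, tensorPiece R (ℳ p.1) (ℬ p.2))
    (hM'coact : ∀ n : ℤ, ∀ x ∈ ℳ' n, ρM' x ∈
      ⨆ p : ℤ × ℤ, ⨆ _ : p.1 + p.2 = n, tensorPiece R (ℳ' p.1) (ℬ p.2)) :
    letI Φ : (DirectSum ℤ fun n : ℤ => ↥(homogComodHom R ρM ρM' ℳ ℳ' n)) →+ (M →ₗ[R] M') :=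
      DirectSum.toAddMonoid (fun n => (homogComodHom R ρM ρM' ℳ ℳ' n).subtype)
    Function.Injective Φ ∧
      Set.range Φ = {f : M →ₗ[R] M' | IsComodMap R ρM ρM' f} := by
  have : SetLike.GradedSMul 𝒜 ℳ := ⟨@fun i j r x hr hx => hMsmul i j r x hr hx⟩
  have : SetLike.GradedSMul 𝒜 ℳ' := ⟨@fun i j r x hr hx => hM'smul i j r x hr hx⟩
  have : SetLike.GradedSMul 𝒜 ℬ := ⟨@fun i j r x hr hx => hAsmul i j r x hr hx⟩
  refine ⟨injective_toAddMonoid_subtype_of_isOfDegree fun n f hf => hf.2,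
    Set.Subset.antisymm ?_ fun f hf => ?_⟩
  · rintro _ ⟨c, rfl⟩
    induction c using DirectSum.induction_on with
    | zero => simpa using isComodMap_zero
    | of n f => simpa using f.2.1
    | add c c' hc hc' => simpa using hc.add hc'
  · obtain ⟨S, hS⟩ := f.exists_finset_sum_homogComponent_eq (𝒜 := 𝒜) (ℳ := ℳ) (ℳ' := ℳ')
    refine ⟨∑ n ∈ S, of _ n ⟨f.homogComponent 𝒜 ℳ ℳ' n,
      IsComodMap.homogComponent hMcoact hM'coact hf n, f.isOfDegree_homogComponent n⟩, ?_⟩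
    simp [hS]

set_option maxHeartbeats 1000000 in
set_option synthInstance.maxHeartbeats 400000 in
theorem forget_grading_comodHom_bijective
    {R : Type*} [CommRing R] [IsNoetherianRing R]
    (𝒜 : ℤ → AddSubgroup R) [GradedRing 𝒜]
    {A : Type*} [Ring A] [HopfAlgebra R A] [Module.Flat R A]
    (ℬ : ℤ → AddSubgroup A) [DirectSum.Decomposition ℬ]
    (hAsmul : ∀ (i j : ℤ) (r : R) (a : A), r ∈ 𝒜 i → a ∈ ℬ j → r • a ∈ ℬ (i + j))
    (hAmul : ∀ (i j : ℤ) (a b : A), a ∈ ℬ i → b ∈ ℬ j → a * b ∈ ℬ (i + j))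
    (hAunit : ∀ (i : ℤ) (r : R), r ∈ 𝒜 i → algebraMap R A r ∈ ℬ i)
    (hAcomul : ∀ n : ℤ, ∀ a ∈ ℬ n, Coalgebra.comul (R := R) a ∈
      ⨆ p : ℤ × ℤ, ⨆ _ : p.1 + p.2 = n, tensorPiece R (ℬ p.1) (ℬ p.2))
    (hAcounit : ∀ n : ℤ, ∀ a ∈ ℬ n, Coalgebra.counit (R := R) a ∈ 𝒜 n)
    (hAantipode : ∀ n : ℤ, ∀ a ∈ ℬ n, HopfAlgebra.antipode (R := R) a ∈ ℬ n)
    {M : Type*} [AddCommGroup M] [Module R M] [Module.Finite R M]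
    {M' : Type*} [AddCommGroup M'] [Module R M'] [Module.Finite R M']
    (ρM : M →ₗ[R] M ⊗[R] A) (ρM' : M' →ₗ[R] M' ⊗[R] A)
    (hM : IsComoduleCoaction R ρM) (hM' : IsComoduleCoaction R ρM')
    (ℳ : ℤ → AddSubgroup M) [DirectSum.Decomposition ℳ]
    (ℳ' : ℤ → AddSubgroup M') [DirectSum.Decomposition ℳ']
    (hMsmul : ∀ (i j : ℤ) (r : R) (x : M), r ∈ 𝒜 i → x ∈ ℳ j → r • x ∈ ℳ (i + j))
    (hM'smul : ∀ (i j : ℤ) (r : R) (x : M'), r ∈ 𝒜 i → x ∈ ℳ' j → r • x ∈ ℳ' (i + j))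
    (hMcoact : ∀ n : ℤ, ∀ x ∈ ℳ n, ρM x ∈
      ⨆ p : ℤ × ℤ, ⨆ _ : p.1 + p.2 = n, tensorPiece R (ℳ p.1) (ℬ p.2))
    (hM'coact : ∀ n : ℤ, ∀ x ∈ ℳ' n, ρM' x ∈
      ⨆ p : ℤ × ℤ, ⨆ _ : p.1 + p.2 = n, tensorPiece R (ℳ' p.1) (ℬ p.2)) :
    letI Φ : (DirectSum ℤ fun n : ℤ => ↥(homogComodHom R ρM ρM' ℳ ℳ' n)) →+ (M →ₗ[R] M') :=
      DirectSum.toAddMonoid (fun n => (homogComodHom R ρM ρM' ℳ ℳ' n).subtype)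
    Function.Injective Φ ∧
      Set.range Φ = {f : M →ₗ[R] M' | IsComodMap R ρM ρM' f} :=
  forget_grading_comodHom_bijective_general 𝒜 ℬ hAsmul ρM ρM' ℳ ℳ' hMsmul hM'smul hMcoact hM'coact
end

section
/- Let R be a commutative domain with field of fractions Q, let s be a ring automorphism of R with s ∘ s = id, let R^s = {r ∈ R | s(r) = r} be its fixed subring, and let δ ∈ R be an element such that (1, δ) is a basis of R as an R^s-module. Consider B := R ⊗_{R^s} Q, regarded as a left R-module via the first tensor factor and a right Q-module via the second. Then: (i) the pair (δ⊗1 − 1⊗s(δ), δ⊗1 − 1⊗δ) is a basis of B as a right Q-module, so that B = (δ⊗1 − 1⊗s(δ))·Q ⊕ (δ⊗1 − 1⊗δ)·Q; (ii) for every r ∈ R one has r·(δ⊗1 − 1⊗s(δ)) = (δ⊗1 − 1⊗s(δ))·r and s(r)·(δ⊗1 − 1⊗δ) = (δ⊗1 − 1⊗δ)·r, where n·r denotes the right action of the image of r in Q. -/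
/-!
With `t = δ + s δ` and `n = δ · s δ` fixed by `s`, `δ` is a root of `X² - t X + n` over `R^s`.
Since `t ⊗ 1 = 1 ⊗ t` and `n ⊗ 1 = 1 ⊗ n`, the element `D = δ ⊗ 1` of `B` satisfies
`(D - 1 ⊗ δ) (D - 1 ⊗ s δ) = 0`, that is `ξ η = 0`. Writing `r = a + b δ` with `a, b ∈ R^s`, one has
`r ⊗ 1 - 1 ⊗ r = (1 ⊗ b) ξ` and `s r ⊗ 1 - 1 ⊗ r = -(1 ⊗ b) η`, which gives (ii). For (i), base
change makes `(1, D)` a `Q`-basis of `B`, and `(η, ξ) = (D - 1 ⊗ s δ, D - 1 ⊗ δ)` is obtained from it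
by a matrix of determinant `δ - s δ`, which is nonzero because `δ ∉ R^s`.
-/

open TensorProduct

/-- The subring of fixed points of a ring automorphism `s` of `R`. -/
def RingAut.fixedSubring {R : Type*} [CommRing R] (s : RingAut R) : Subring R where
  carrier := {r : R | s r = r}
  zero_mem' := by simp
  one_mem' := by simp
  add_mem' := fun {a b} ha hb => by
    have ha' : s a = a := ha
    have hb' : s b = b := hb
    show s (a + b) = a + b
    rw [map_add, ha', hb']
  neg_mem' := fun {a} ha => by
    have ha' : s a = a := ha
    show s (-a) = -a
    rw [map_neg, ha']
  mul_mem' := fun {a b} ha hb => by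
    have ha' : s a = a := ha
    have hb' : s b = b := hb
    show s (a * b) = a * b
    rw [map_mul, ha', hb']

namespace Module.Basis

variable {A M : Type*} [Ring A] [AddCommGroup M] [Module A M]

noncomputable def ofExistsUniquePair {e₁ e₂ : M}
    (h : ∀ m : M, ∃! p : A × A, m = p.1 • e₁ + p.2 • e₂) : Basis (Fin 2) A M :=
  .mk (v := ![e₁, e₂])
    (LinearIndependent.pair_iff.mpr fun s t hst => by
      have hu := (h 0).unique (y₁ := (s, t)) (y₂ := (0, 0)) hst.symm (by simp)
      exact ⟨congrArg Prod.fst hu, congrArg Prod.snd hu⟩)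
    (fun m _ => by
      obtain ⟨p, hp, -⟩ := h m
      rw [Matrix.range_cons_cons_empty, Submodule.mem_span_pair]
      exact ⟨p.1, p.2, hp.symm⟩)

@[simp]
theorem coe_ofExistsUniquePair {e₁ e₂ : M}
    (h : ∀ m : M, ∃! p : A × A, m = p.1 • e₁ + p.2 • e₂) : ⇑(ofExistsUniquePair h) = ![e₁, e₂] :=
  coe_mk _ _

end Module.Basis

theorem Module.Basis.apply_one_notMem_range_algebraMap {A R : Type*} [CommRing A] [Nontrivial A]
    [Ring R] [Algebra A R] (b : Basis (Fin 2) A R) (hb : b 0 = 1) :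
    b 1 ∉ Set.range (algebraMap A R) := by
  rintro ⟨a, ha⟩
  have := congrArg (fun m => b.repr m 1) ha
  simp [Algebra.algebraMap_eq_smul_one, ← hb] at this

theorem TensorProduct.existsUnique_eq_tmul_add_tmul {A M N : Type*} [CommRing A]
    [AddCommGroup M] [Module A M] [AddCommGroup N] [Module A N] (b : Module.Basis (Fin 2) A M)
    (x : M ⊗[A] N) : ∃! n : N × N, x = b 0 ⊗ₜ n.1 + b 1 ⊗ₜ n.2 := by
  set e := equivFinsuppOfBasisLeft (N := N) b
  refine ⟨(e x 0, e x 1), ?_, ?_⟩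
  · calc x = e.symm (e x) := (e.symm_apply_apply x).symm
      _ = _ := by
        rw [equivFinsuppOfBasisLeft_symm_apply, Finsupp.sum_fintype _ _ (by simp),
          Fin.sum_univ_two]
  · rintro ⟨n₁, n₂⟩ rfl
    simp [e]

theorem Algebra.TensorProduct.eqOn_includeLeft_includeRight {A R S : Type*} [CommRing A]
    [CommRing R] [CommRing S] [Algebra A R] [Algebra A S] [Algebra R S] [IsScalarTower A R S] :
    Set.EqOn (includeLeftRingHom : R →+* R ⊗[A] S)
      ((includeRight : S →ₐ[A] R ⊗[A] S).toRingHom.comp (algebraMap R S))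
      (Set.range (algebraMap A R)) := by
  rintro _ ⟨a, rfl⟩
  simp [← IsScalarTower.algebraMap_apply, ← algebraMap_apply]

theorem bijective_coeffs_mul_sub_add_mul_sub {K : Type*} [Field K] {u v : K} (huv : u ≠ v) :
    Function.Bijective fun q : K × K => (-(q.1 * u + q.2 * v), q.1 + q.2) := by
  have huv' : u - v ≠ 0 := sub_ne_zero.mpr huv
  refine Function.bijective_iff_has_inverse.mpr
    ⟨fun c => (c.2 - (c.1 + u * c.2) / (u - v), (c.1 + u * c.2) / (u - v)), ?_, ?_⟩
  · rintro ⟨q₁, q₂⟩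
    ext <;> field_simp <;> ring
  · rintro ⟨c₁, c₂⟩
    ext <;> field_simp <;> ring

theorem existsUnique_eq_mul_sub_add_mul_sub {K B : Type*} [Field K] [CommRing B] (ι : K →+* B)
    {D : B} (hD : ∀ x : B, ∃! c : K × K, x = ι c.1 + ι c.2 * D) {u v : K} (huv : u ≠ v)
    (x : B) : ∃! q : K × K, x = ι q.1 * (D - ι u) + ι q.2 * (D - ι v) := by
  have hcoeffs : ∀ q : K × K, ι q.1 * (D - ι u) + ι q.2 * (D - ι v) =
      ι (-(q.1 * u + q.2 * v)) + ι (q.1 + q.2) * D := by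
    intro q
    simp only [map_neg, map_add, map_mul]
    ring
  simp_rw [hcoeffs]
  exact (bijective_coeffs_mul_sub_add_mul_sub huv).existsUnique_iff.mp (hD x)

section EqOn

variable {R B : Type*} [CommRing R] [CommRing B] {T : Set R} {f g : R →+* B}

theorem map_sub_map_mul_map_sub_map_eq_zero (hfg : Set.EqOn f g T) {δ δ' : R}
    (ht : δ + δ' ∈ T) (hn : δ * δ' ∈ T) : (f δ - g δ) * (f δ - g δ') = 0 := by
  have e_t := hfg ht
  have e_n := hfg hn
  simp only [map_add, map_mul] at e_t e_n
  linear_combination f δ * e_t - e_n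

theorem map_mul_map_sub_map_eq_of_eq_add_mul (hfg : Set.EqOn f g T) {δ δ' : R}
    (ht : δ + δ' ∈ T) (hn : δ * δ' ∈ T) {r a b : R} (ha : a ∈ T) (hb : b ∈ T)
    (hr : r = a + b * δ) : f r * (f δ - g δ') = g r * (f δ - g δ') := by
  have hdiff : f r - g r = f b * (f δ - g δ) := by
    rw [hr, map_add, map_add, map_mul, map_mul, hfg ha, hfg hb]
    ring
  linear_combination (f δ - g δ') * hdiff + f b * map_sub_map_mul_map_sub_map_eq_zero hfg ht hn

theorem map_mul_map_sub_map_eq_of_eq_add_mul' (hfg : Set.EqOn f g T) {δ δ' : R}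
    (ht : δ + δ' ∈ T) (hn : δ * δ' ∈ T) {r r' a b : R} (ha : a ∈ T) (hb : b ∈ T)
    (hr : r = a + b * δ) (hr' : r' = a + b * δ') :
    f r' * (f δ - g δ) = g r * (f δ - g δ) := by
  have hdiff : f r' - g r = f b * (f δ' - g δ) := by
    rw [hr, hr', map_add, map_add, map_mul, map_mul, hfg ha, hfg hb]
    ring
  -- `f δ' - g δ = -(f δ - g δ')`, as `f` and `g` agree on `δ + δ'`
  have e_t := hfg ht
  simp only [map_add] at e_t
  linear_combination (f δ - g δ) * hdiff - f b * map_sub_map_mul_map_sub_map_eq_zero hfg ht hn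
    + f b * (f δ - g δ) * e_t

end EqOn

theorem weight_basis_of_Bs_tensor_Q
    {R : Type*} [CommRing R] [IsDomain R]
    (s : RingAut R) (hs : ∀ r : R, s (s r) = r)
    (δ : R)
    (hδ : ∀ r : R, ∃! p : s.fixedSubring × s.fixedSubring, r = (p.1 : R) + (p.2 : R) * δ) :
    letI Q := FractionRing R
    letI : Algebra s.fixedSubring R := s.fixedSubring.subtype.toAlgebra
    letI : Algebra s.fixedSubring Q :=
      ((algebraMap R Q).comp s.fixedSubring.subtype).toAlgebra
    letI η : R ⊗[s.fixedSubring] Q := δ ⊗ₜ (1 : Q) - (1 : R) ⊗ₜ (algebraMap R Q (s δ))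
    letI ξ : R ⊗[s.fixedSubring] Q := δ ⊗ₜ (1 : Q) - (1 : R) ⊗ₜ (algebraMap R Q δ)
    (∀ x : R ⊗[s.fixedSubring] Q, ∃! q : Q × Q,
        x = ((1 : R) ⊗ₜ q.1) * η + ((1 : R) ⊗ₜ q.2) * ξ) ∧
    (∀ r : R, (r ⊗ₜ (1 : Q)) * η = ((1 : R) ⊗ₜ (algebraMap R Q r)) * η) ∧
    (∀ r : R, ((s r) ⊗ₜ (1 : Q)) * ξ = ((1 : R) ⊗ₜ (algebraMap R Q r)) * ξ) := by
  have hfg := Algebra.TensorProduct.eqOn_includeLeft_includeRight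
    (A := s.fixedSubring) (R := R) (S := FractionRing R)
  have hsum : δ + s δ ∈ Set.range (algebraMap s.fixedSubring R) :=
    ⟨⟨δ + s δ, show s (δ + s δ) = δ + s δ by rw [map_add, hs, add_comm]⟩, rfl⟩
  have hprod : δ * s δ ∈ Set.range (algebraMap s.fixedSubring R) :=
    ⟨⟨δ * s δ, show s (δ * s δ) = δ * s δ by rw [map_mul, hs, mul_comm]⟩, rfl⟩
  have hδ' : ∀ r : R, ∃! p : s.fixedSubring × s.fixedSubring, r = p.1 • (1 : R) + p.2 • δ := by
    simpa [Subring.smul_def] using hδ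
  set b := Module.Basis.ofExistsUniquePair hδ'
  have hb0 : b 0 = 1 := by simp [b]
  have hb1 : b 1 = δ := by simp [b]
  refine ⟨fun x => ?_, fun r => ?_, fun r => ?_⟩
  · have hD : ∀ x : R ⊗[s.fixedSubring] FractionRing R, ∃! c : FractionRing R × FractionRing R,
        x = 1 ⊗ₜ c.1 + (1 ⊗ₜ c.2) * (δ ⊗ₜ 1) := fun x => by
      simpa [Algebra.TensorProduct.tmul_mul_tmul, hb0, hb1] using
        TensorProduct.existsUnique_eq_tmul_add_tmul b x
    have hsδ : s δ ≠ δ := fun h => b.apply_one_notMem_range_algebraMap hb0 (hb1 ▸ ⟨⟨δ, h⟩, rfl⟩)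
    exact existsUnique_eq_mul_sub_add_mul_sub (B := R ⊗[s.fixedSubring] FractionRing R)
      Algebra.TensorProduct.includeRight.toRingHom hD
      ((IsFractionRing.injective R (FractionRing R)).ne hsδ) x
  · obtain ⟨⟨a, c⟩, hr, -⟩ := hδ r
    exact map_mul_map_sub_map_eq_of_eq_add_mul hfg hsum hprod ⟨a, rfl⟩ ⟨c, rfl⟩ hr
  · obtain ⟨⟨a, c⟩, hr, -⟩ := hδ r
    have hr' : s r = a + c * s δ := by rw [hr, map_add, map_mul, a.2, c.2]
    exact map_mul_map_sub_map_eq_of_eq_add_mul' hfg hsum hprod ⟨a, rfl⟩ ⟨c, rfl⟩ hr hr'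
end

section
/- Let R be a commutative ring, let s be a ring automorphism of R with s ∘ s = id, let R^s = {r ∈ R | s(r) = r} be its fixed subring, and let δ ∈ R be an element such that (1, δ) is a basis of R as an R^s-module. Consider the R-bimodule B := R ⊗_{R^s} R (left R-action on the first factor, right R-action on the second). Then the multiplication map μ : B → R, a⊗b ↦ ab, is a surjective morphism of R-bimodules, its kernel is a free left R-module of rank one generated by ξ := δ⊗1 − 1⊗δ, and ξ satisfies ξ·r = s(r)·ξ for every r ∈ R. -/
open TensorProduct

/-!
Over `R^s` the ring `R` is free on `1, δ`, so `R ⊗_{R^s} R` is a free left `R`-module on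
`1 ⊗ 1, 1 ⊗ δ`. In these coordinates `μ (a ⊗ 1 + c ⊗ δ) = a + c δ`, so the kernel consists of the
elements `-c δ ⊗ 1 + c ⊗ δ = (-c ⊗ 1) ξ`, and `r ξ` has coordinate `-r` at `1 ⊗ δ`, which makes
`r ↦ r ξ` injective. Both sides of `ξ (1 ⊗ r) = (s r ⊗ 1) ξ` are `R^s`-linear in `r`, so it suffices
to check `r = δ`; there the trace `δ + s δ` and the norm `δ s δ` are fixed by `s`, hence can be
moved across the tensor sign, and the identity becomes a ring identity.
-/

open Module

namespace Algebra

variable {A R : Type*} [CommRing A] [CommRing R] [Algebra A R]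

noncomputable def basisOneOfExistsUnique (δ : R)
    (h : ∀ r : R, ∃! p : A × A, r = algebraMap A R p.1 + algebraMap A R p.2 * δ) :
    Basis (Fin 2) A R :=
  Basis.mk (v := ![1, δ])
    (LinearIndependent.pair_iff.2 fun s t hst => by
      have := (h 0).unique (y₁ := (s, t)) (y₂ := (0, 0))
        (by simpa [Algebra.smul_def, eq_comm] using hst) (by simp)
      simpa [Prod.ext_iff] using this)
    (by
      rintro r -
      obtain ⟨⟨p, q⟩, hr, -⟩ := h r
      rw [Matrix.range_cons_cons_empty, Submodule.mem_span_pair]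
      exact ⟨p, q, by simp [Algebra.smul_def, hr]⟩)

@[simp]
lemma coe_basisOneOfExistsUnique (δ : R)
    (h : ∀ r : R, ∃! p : A × A, r = algebraMap A R p.1 + algebraMap A R p.2 * δ) :
    ⇑(basisOneOfExistsUnique δ h) = ![1, δ] :=
  Basis.coe_mk _ _

end Algebra

namespace Algebra.TensorProduct

section Basis

variable {A S M : Type*} [CommSemiring A] [CommSemiring S] [Algebra A S]
  [AddCommMonoid M] [Module A M]

lemma tmul_eq_smul_basis {ι : Type*} (b : Basis ι A M) (a : S) (i : ι) :
    a ⊗ₜ[A] b i = a • basis S b i := by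
  rw [basis_apply, TensorProduct.smul_tmul', smul_eq_mul, mul_one]

lemma exists_eq_tmul_add_tmul (b : Basis (Fin 2) A M) {m₀ m₁ : M} (hb₀ : b 0 = m₀)
    (hb₁ : b 1 = m₁) (x : S ⊗[A] M) :
    ∃ a c : S, x = a ⊗ₜ m₀ + c ⊗ₜ m₁ := by
  subst hb₀ hb₁
  refine ⟨(basis S b).repr x 0, (basis S b).repr x 1, ?_⟩
  rw [tmul_eq_smul_basis, tmul_eq_smul_basis, ← Fin.sum_univ_two (f := fun i => _ • _),
    (basis S b).sum_repr]

lemma tmul_add_tmul_inj (b : Basis (Fin 2) A M) {m₀ m₁ : M} (hb₀ : b 0 = m₀)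
    (hb₁ : b 1 = m₁) {a c a' c' : S} :
    a ⊗ₜ m₀ + c ⊗ₜ m₁ = a' ⊗ₜ[A] m₀ + c' ⊗ₜ m₁ ↔ a = a' ∧ c = c' := by
  subst hb₀ hb₁
  refine ⟨fun h => ?_, by rintro ⟨rfl, rfl⟩; rfl⟩
  have h' := congrArg (basis S b).repr h
  simp only [tmul_eq_smul_basis, map_add, map_smul, Basis.repr_self] at h'
  exact ⟨by simpa using congrArg (· 0) h', by simpa using congrArg (· 1) h'⟩

end Basis

variable {A R : Type*} [CommRing A] [CommRing R] [Algebra A R]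

lemma lmul'_surjective : Function.Surjective (lmul' (S := R) A) :=
  fun r => ⟨r ⊗ₜ 1, by rw [lmul'_apply_tmul, mul_one]⟩

lemma lmul'_tmul_one_mul (r : R) (x : R ⊗[A] R) : lmul' A (r ⊗ₜ 1 * x) = r * lmul' A x := by
  rw [map_mul, lmul'_apply_tmul, mul_one]

lemma lmul'_mul_one_tmul (r : R) (x : R ⊗[A] R) : lmul' A (x * 1 ⊗ₜ r) = lmul' A x * r := by
  rw [map_mul, lmul'_apply_tmul, one_mul]

lemma tmul_one_mul_tmul_one_sub_one_tmul (r δ : R) :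
    (r ⊗ₜ[A] 1) * (δ ⊗ₜ 1 - 1 ⊗ₜ δ) = (r * δ) ⊗ₜ 1 + (-r) ⊗ₜ δ := by
  simp only [mul_sub, tmul_mul_tmul, mul_one, one_mul, TensorProduct.neg_tmul, ← sub_eq_add_neg]

lemma lmul'_eq_zero_iff (b : Basis (Fin 2) A R) {δ : R} (hb₀ : b 0 = 1) (hb₁ : b 1 = δ)
    (x : R ⊗[A] R) :
    lmul' A x = 0 ↔ ∃ r : R, x = (r ⊗ₜ 1) * (δ ⊗ₜ 1 - 1 ⊗ₜ δ) := by
  obtain ⟨a, c, rfl⟩ := exists_eq_tmul_add_tmul b hb₀ hb₁ x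
  simp only [map_add, lmul'_apply_tmul, mul_one, tmul_one_mul_tmul_one_sub_one_tmul,
    tmul_add_tmul_inj b hb₀ hb₁]
  constructor
  · intro h
    exact ⟨-c, by linear_combination h, by ring⟩
  · rintro ⟨r, rfl, rfl⟩
    ring

lemma tmul_one_mul_tmul_one_sub_one_tmul_injective (b : Basis (Fin 2) A R) {δ : R}
    (hb₀ : b 0 = 1) (hb₁ : b 1 = δ) :
    Function.Injective fun r : R => (r ⊗ₜ[A] 1) * (δ ⊗ₜ[A] 1 - 1 ⊗ₜ[A] δ) := by
  intro r r' h
  simp only [tmul_one_mul_tmul_one_sub_one_tmul, tmul_add_tmul_inj b hb₀ hb₁, neg_inj] at h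
  exact h.2

lemma tmul_one_sub_one_tmul_mul_one_tmul {δ : R} (hspan : Submodule.span A {1, δ} = ⊤)
    (s : R →ₐ[A] R) (htr : δ + s δ ∈ Set.range (algebraMap A R))
    (hnorm : δ * s δ ∈ Set.range (algebraMap A R)) (r : R) :
    (δ ⊗ₜ[A] 1 - 1 ⊗ₜ δ) * (1 ⊗ₜ r) = (s r ⊗ₜ 1) * (δ ⊗ₜ 1 - 1 ⊗ₜ δ) := by
  set ξ : R ⊗[A] R := δ ⊗ₜ 1 - 1 ⊗ₜ δ
  have on_gens : ∀ t ∈ ({1, δ} : Set R), ξ * (1 ⊗ₜ t) = (s t ⊗ₜ 1) * ξ := by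
    simp only [Set.mem_insert_iff, Set.mem_singleton_iff, forall_eq_or_imp, forall_eq]
    refine ⟨by simp [← Algebra.TensorProduct.one_def], ?_⟩
    obtain ⟨tr, htr⟩ := htr
    obtain ⟨nm, hnm⟩ := hnorm
    have hsum : δ ⊗ₜ[A] (1 : R) + s δ ⊗ₜ 1 = 1 ⊗ₜ δ + 1 ⊗ₜ s δ := by
      rw [← add_tmul, ← tmul_add, ← htr, tmul_one_eq_one_tmul]
    have hprod : (δ ⊗ₜ[A] (1 : R)) * (s δ ⊗ₜ 1) = (1 ⊗ₜ δ) * (1 ⊗ₜ s δ) := by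
      simp only [tmul_mul_tmul, mul_one]
      rw [← hnm, tmul_one_eq_one_tmul]
    linear_combination (1 ⊗ₜ δ) * hsum - hprod
  exact LinearMap.congr_fun (LinearMap.ext_on hspan on_gens
    (f := LinearMap.mulLeft A ξ ∘ₗ TensorProduct.mk A R R 1)
    (g := LinearMap.mulRight A ξ ∘ₗ (TensorProduct.mk A R R).flip 1 ∘ₗ s.toLinearMap)) r

end Algebra.TensorProduct

theorem mult_map_kernel_free_rank_one
    {R : Type*} [CommRing R] (s : RingAut R) (hs : ∀ r : R, s (s r) = r)
    (δ : R)
    (hδ : ∀ r : R, ∃! p : s.fixedSubring × s.fixedSubring, r = (p.1 : R) + (p.2 : R) * δ) :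
    letI : Algebra s.fixedSubring R := s.fixedSubring.subtype.toAlgebra
    letI μ : R ⊗[s.fixedSubring] R →ₐ[s.fixedSubring] R :=
      Algebra.TensorProduct.lmul' s.fixedSubring
    letI ξ : R ⊗[s.fixedSubring] R := δ ⊗ₜ (1 : R) - (1 : R) ⊗ₜ δ
    Function.Surjective μ ∧
    (∀ (r : R) (x : R ⊗[s.fixedSubring] R), μ ((r ⊗ₜ (1 : R)) * x) = r * μ x) ∧
    (∀ (r : R) (x : R ⊗[s.fixedSubring] R), μ (x * ((1 : R) ⊗ₜ r)) = μ x * r) ∧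
    (∀ x : R ⊗[s.fixedSubring] R, μ x = 0 ↔ ∃ r : R, x = (r ⊗ₜ (1 : R)) * ξ) ∧
    (∀ r r' : R, (r ⊗ₜ (1 : R)) * ξ = (r' ⊗ₜ (1 : R)) * ξ → r = r') ∧
    (∀ r : R, ξ * ((1 : R) ⊗ₜ r) = ((s r) ⊗ₜ (1 : R)) * ξ) := by
  let _ : Algebra s.fixedSubring R := s.fixedSubring.subtype.toAlgebra
  let b := Algebra.basisOneOfExistsUnique δ hδ
  have hb : ⇑b = ![1, δ] := Algebra.coe_basisOneOfExistsUnique δ hδ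
  have hb₀ : b 0 = 1 := congrFun hb 0
  have hb₁ : b 1 = δ := congrFun hb 1
  let σ : R →ₐ[s.fixedSubring] R := { s.toRingHom with commutes' := fun a => a.2 }
  have fixed_mem_range {x : R} (hx : s x = x) : x ∈ Set.range (algebraMap s.fixedSubring R) :=
    ⟨⟨x, hx⟩, rfl⟩
  refine ⟨Algebra.TensorProduct.lmul'_surjective, Algebra.TensorProduct.lmul'_tmul_one_mul,
    Algebra.TensorProduct.lmul'_mul_one_tmul,
    Algebra.TensorProduct.lmul'_eq_zero_iff b hb₀ hb₁,
    fun r r' => (Algebra.TensorProduct.tmul_one_mul_tmul_one_sub_one_tmul_injective b hb₀ hb₁ ·),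
    Algebra.TensorProduct.tmul_one_sub_one_tmul_mul_one_tmul ?_ σ ?_ ?_⟩
  · rw [← Matrix.range_cons_cons_empty 1 δ ![], ← hb]
    exact b.span_eq
  · exact fixed_mem_range (by simp [σ, hs, add_comm])
  · exact fixed_mem_range (by simp [σ, hs, mul_comm])
end

section
/- Let R be a commutative ring, let s be a ring automorphism of R with s ∘ s = id, let R^s = {r ∈ R | s(r) = r} be its fixed subring, and let δ ∈ R be an element such that (1, δ) is a basis of R as an R^s-module. Consider the R-bimodule B := R ⊗_{R^s} R (left R-action on the first factor, right R-action on the second). Then there is a well-defined additive map ν : B → R with ν(a⊗b) = a·s(b); it is surjective, satisfies ν(r·x) = r·ν(x) and ν(x·r) = s(r)·ν(x) for all r ∈ R and x ∈ B, its kernel is a free left R-module of rank one generated by η := δ⊗1 − 1⊗s(δ), and η satisfies η·r = r·η for every r ∈ R. -/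
open TensorProduct

/-!
Statement 7: Let `R` be a commutative ring, `s` a ring automorphism of `R` with `s ∘ s = id`,
`R^s` its fixed subring, and `δ ∈ R` such that `(1, δ)` is a basis of `R` as an `R^s`-module.
Let `B := R ⊗_{R^s} R`, an `R`-bimodule where the left action of `r` is multiplication by
`r ⊗ 1` and the right action of `r` is multiplication by `1 ⊗ r`.  Then there is a well-defined
additive map `ν : B → R` with `ν(a ⊗ b) = a * s(b)`; it is surjective, it intertwines the left
action with multiplication and the right action with multiplication through `s`, its kernel is
a free left `R`-module of rank one generated by `η := δ ⊗ 1 - 1 ⊗ s(δ)`, and `η · r = r · η`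
for all `r ∈ R`.
-/

section Aux
variable {R : Type*} [CommRing R] (s : RingAut R) (δ : R)
  (hδ : ∀ r : R, ∃! p : s.fixedSubring × s.fixedSubring, r = (p.1 : R) + (p.2 : R) * δ)

noncomputable def coef (r : R) : s.fixedSubring × s.fixedSubring := (hδ r).choose

lemma coef_spec (r : R) : r = ((coef s δ hδ r).1 : R) + ((coef s δ hδ r).2 : R) * δ :=
  (hδ r).choose_spec.1

lemma coef_eq {r : R} (p : s.fixedSubring × s.fixedSubring) (h : r = (p.1 : R) + (p.2 : R) * δ) :
    coef s δ hδ r = p :=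
  ((hδ r).unique (coef_spec s δ hδ r) h)

lemma coef_add (a b : R) : coef s δ hδ (a + b) = coef s δ hδ a + coef s δ hδ b := by
  apply coef_eq
  have ha := coef_spec s δ hδ a
  have hb := coef_spec s δ hδ b
  simp only [Prod.fst_add, Prod.snd_add, Subring.coe_add]
  conv_lhs => rw [ha, hb]
  ring

lemma coef_smul (c : s.fixedSubring) (a : R) :
    coef s δ hδ ((c : R) * a) = c • coef s δ hδ a := by
  apply coef_eq
  have ha := coef_spec s δ hδ a
  simp only [Prod.smul_fst, Prod.smul_snd, smul_eq_mul, Subring.coe_mul]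
  conv_lhs => rw [ha]
  ring

noncomputable def pi1 : R →ₗ[s.fixedSubring] R where
  toFun r := ((coef s δ hδ r).1 : R)
  map_add' a b := by
    show ((coef s δ hδ (a + b)).1 : R) = _
    rw [coef_add]; rfl
  map_smul' c a := by
    show ((coef s δ hδ ((c:R) * a)).1 : R) = c • ((coef s δ hδ a).1 : R)
    rw [coef_smul]
    rfl

noncomputable def pi2 : R →ₗ[s.fixedSubring] R where
  toFun r := ((coef s δ hδ r).2 : R)
  map_add' a b := by
    show ((coef s δ hδ (a + b)).2 : R) = _
    rw [coef_add]; rfl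
  map_smul' c a := by
    show ((coef s δ hδ ((c:R) * a)).2 : R) = c • ((coef s δ hδ a).2 : R)
    rw [coef_smul]
    rfl

noncomputable def Fmap (π : R →ₗ[s.fixedSubring] R) : R ⊗[s.fixedSubring] R →ₗ[s.fixedSubring] R :=
  TensorProduct.lift <| LinearMap.mk₂ s.fixedSubring (fun a b => π b * a)
    (fun a a' b => by ring)
    (fun c a b => by show π b * ((c:R) * a) = (c:R) * (π b * a); ring)
    (fun a b b' => by show π (b + b') * a = π b * a + π b' * a; rw [map_add]; ring)
    (fun c a b => by
      show π (c • b) * a = c • (π b * a)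
      rw [map_smul]
      show ((c:R) * π b) * a = (c:R) * (π b * a); ring)

lemma Fmap_tmul (π : R →ₗ[s.fixedSubring] R) (a b : R) : Fmap s π (a ⊗ₜ b) = π b * a := rfl

end Aux

section More
variable {R : Type*} [CommRing R] (s : RingAut R) (δ : R)
  (hδ : ∀ r : R, ∃! p : s.fixedSubring × s.fixedSubring, r = (p.1 : R) + (p.2 : R) * δ)

lemma coef_one : coef s δ hδ 1 = (1, 0) := coef_eq s δ hδ _ (by simp)

lemma coef_delta : coef s δ hδ δ = (0, 1) := coef_eq s δ hδ _ (by simp)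

lemma tmul_coe_mul (c : s.fixedSubring) (a b : R) :
    a ⊗ₜ[s.fixedSubring] ((c : R) * b) = (((c : R) * a) ⊗ₜ b : R ⊗[s.fixedSubring] R) := by
  show a ⊗ₜ (c • b) = (c • a) ⊗ₜ b
  rw [tmul_smul, smul_tmul']

lemma decomp (x : R ⊗[s.fixedSubring] R) :
    x = (Fmap s (pi1 s δ hδ) x) ⊗ₜ 1 + (Fmap s (pi2 s δ hδ) x) ⊗ₜ δ := by
  induction x using TensorProduct.induction_on with
  | zero => simp
  | tmul a b =>
    rw [Fmap_tmul, Fmap_tmul]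
    show a ⊗ₜ b = (((coef s δ hδ b).1 : R) * a) ⊗ₜ 1 + (((coef s δ hδ b).2 : R) * a) ⊗ₜ δ
    rw [← tmul_coe_mul, ← tmul_coe_mul, mul_one, ← tmul_add, ← coef_spec]
  | add x y hx hy =>
    rw [map_add, map_add, add_tmul, add_tmul]
    conv_lhs => rw [hx, hy]
    abel

lemma F1_val (u v : R) : Fmap s (pi1 s δ hδ) (u ⊗ₜ 1 + v ⊗ₜ δ) = u := by
  rw [map_add, Fmap_tmul, Fmap_tmul]
  show ((coef s δ hδ 1).1 : R) * u + ((coef s δ hδ δ).1 : R) * v = u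
  rw [coef_one, coef_delta]; simp

lemma F2_val (u v : R) : Fmap s (pi2 s δ hδ) (u ⊗ₜ 1 + v ⊗ₜ δ) = v := by
  rw [map_add, Fmap_tmul, Fmap_tmul]
  show ((coef s δ hδ 1).2 : R) * u + ((coef s δ hδ δ).2 : R) * v = v
  rw [coef_one, coef_delta]; simp

lemma decomp_unique (hδ : ∀ r : R, ∃! p : s.fixedSubring × s.fixedSubring, r = (p.1 : R) + (p.2 : R) * δ) {u v u' v' : R}
    (h : (u ⊗ₜ 1 + v ⊗ₜ δ : R ⊗[s.fixedSubring] R) = u' ⊗ₜ 1 + v' ⊗ₜ δ) : u = u' ∧ v = v' := by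
  constructor
  · have := congrArg (Fmap s (pi1 s δ hδ)) h
    rwa [F1_val, F1_val] at this
  · have := congrArg (Fmap s (pi2 s δ hδ)) h
    rwa [F2_val, F2_val] at this

end More
section Main
variable {R : Type*} [CommRing R] (s : RingAut R) (δ : R)

/-- The norm-like fixed element `δ + s δ`. -/
def Tf (hs : ∀ r : R, s (s r) = r) : s.fixedSubring :=
  ⟨δ + s δ, by show s (δ + s δ) = δ + s δ; rw [map_add, hs]; ring⟩

/-- The fixed element `s δ * δ`. -/
def Nf (hs : ∀ r : R, s (s r) = r) : s.fixedSubring :=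
  ⟨s δ * δ, by show s (s δ * δ) = s δ * δ; rw [map_mul, hs]; ring⟩

lemma tmul_coe (c : s.fixedSubring) (v : R) :
    (v ⊗ₜ (c : R) : R ⊗[s.fixedSubring] R) = (v * (c : R)) ⊗ₜ 1 := by
  conv_lhs => rw [show (c : R) = (c : R) * 1 by rw [mul_one]]
  rw [tmul_coe_mul, mul_comm]

set_option maxHeartbeats 2000000 in
theorem main_aux (hs : ∀ r : R, s (s r) = r)
    (hδ : ∀ r : R, ∃! p : s.fixedSubring × s.fixedSubring, r = (p.1 : R) + (p.2 : R) * δ) :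
    letI sA : R →ₐ[s.fixedSubring] R :=
      { toRingHom := (s : R ≃+* R).toRingHom, commutes' := fun c => c.2 }
    letI ν : R ⊗[s.fixedSubring] R →ₐ[s.fixedSubring] R :=
      (Algebra.TensorProduct.lmul' s.fixedSubring).comp
        (Algebra.TensorProduct.map (AlgHom.id s.fixedSubring R) sA)
    letI η : R ⊗[s.fixedSubring] R := δ ⊗ₜ (1 : R) - (1 : R) ⊗ₜ (s δ)
    (∀ a b : R, ν (a ⊗ₜ b) = a * s b) ∧
    Function.Surjective ν ∧
    (∀ (r : R) (x : R ⊗[s.fixedSubring] R), ν ((r ⊗ₜ (1 : R)) * x) = r * ν x) ∧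
    (∀ (r : R) (x : R ⊗[s.fixedSubring] R), ν (x * ((1 : R) ⊗ₜ r)) = s r * ν x) ∧
    (∀ x : R ⊗[s.fixedSubring] R, ν x = 0 ↔ ∃ r : R, x = (r ⊗ₜ (1 : R)) * η) ∧
    (∀ r r' : R, (r ⊗ₜ (1 : R)) * η = (r' ⊗ₜ (1 : R)) * η → r = r') ∧
    (∀ r : R, η * ((1 : R) ⊗ₜ r) = (r ⊗ₜ (1 : R)) * η) := by
  set ν : R ⊗[s.fixedSubring] R →ₐ[s.fixedSubring] R :=
    (Algebra.TensorProduct.lmul' s.fixedSubring).comp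
      (Algebra.TensorProduct.map (AlgHom.id s.fixedSubring R)
        { toRingHom := (s : R ≃+* R).toRingHom, commutes' := fun c => c.2 }) with hνdef
  set η : R ⊗[s.fixedSubring] R := δ ⊗ₜ (1 : R) - (1 : R) ⊗ₜ (s δ) with hηdef
  have hsδ : s δ = ((Tf s δ hs : R)) - δ := by
    show s δ = (δ + s δ) - δ; ring
  have nu_tmul : ∀ a b : R, ν (a ⊗ₜ b) = a * s b := by
    intro a b
    rw [hνdef]
    simp only [AlgHom.coe_comp, Function.comp_apply, Algebra.TensorProduct.map_tmul,
      Algebra.TensorProduct.lmul'_apply_tmul]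
    rfl
  have nu_eta : ν η = 0 := by
    rw [hηdef]
    rw [map_sub, nu_tmul, nu_tmul, map_one, mul_one, one_mul, hs, sub_self]
  have rmul_eta : ∀ r : R,
      (r ⊗ₜ (1 : R)) * η = (r * δ - r * ((Tf s δ hs : R))) ⊗ₜ 1 + r ⊗ₜ δ := by
    intro r
    rw [hηdef]
    rw [mul_sub, Algebra.TensorProduct.tmul_mul_tmul, Algebra.TensorProduct.tmul_mul_tmul,
      mul_one, one_mul, mul_one, hsδ, tmul_sub, tmul_coe, sub_tmul]
    abel
  refine ⟨nu_tmul, ?_, ?_, ?_, ?_, ?_, ?_⟩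
  · intro r
    exact ⟨r ⊗ₜ 1, by rw [nu_tmul, map_one, mul_one]⟩
  · intro r x
    rw [map_mul, nu_tmul, map_one, mul_one]
  · intro r x
    rw [map_mul, nu_tmul, one_mul, mul_comm]
  · intro x
    constructor
    · intro h0
      set u := Fmap s (pi1 s δ hδ) x with hu
      set v := Fmap s (pi2 s δ hδ) x with hv
      have hx : x = u ⊗ₜ 1 + v ⊗ₜ δ := decomp s δ hδ x
      have hνx : u + v * s δ = 0 := by
        rw [← h0]
        conv_rhs => rw [hx]
        rw [map_add, nu_tmul, nu_tmul, map_one, mul_one]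
      refine ⟨v, ?_⟩
      rw [rmul_eta]
      conv_lhs => rw [hx]
      have : u = v * δ - v * ((Tf s δ hs : R)) := by
        have : u = -(v * s δ) := by linear_combination hνx
        rw [this]
        show -(v * s δ) = v * δ - v * (δ + s δ); ring
      rw [this]
    · rintro ⟨r, rfl⟩
      rw [map_mul, nu_eta, mul_zero]
  · intro r r' h
    rw [rmul_eta, rmul_eta] at h
    exact (decomp_unique s δ hδ h).2
  · -- commutation
    have comm_delta : η * ((1:R) ⊗ₜ δ) = (δ ⊗ₜ (1:R)) * η := by
      rw [hηdef]
      rw [sub_mul, mul_sub, Algebra.TensorProduct.tmul_mul_tmul,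
        Algebra.TensorProduct.tmul_mul_tmul, Algebra.TensorProduct.tmul_mul_tmul,
        Algebra.TensorProduct.tmul_mul_tmul]
      simp only [mul_one, one_mul]
      rw [show s δ * δ = ((Nf s δ hs : R)) from rfl]
      rw [hsδ, tmul_sub, tmul_coe, tmul_coe, one_mul]
      rw [show ((Nf s δ hs : R)) = δ * ((Tf s δ hs : R)) - δ * δ by
        show s δ * δ = δ * (δ + s δ) - δ * δ; ring]
      rw [sub_tmul]
      abel
    intro r
    obtain ⟨⟨p, q⟩, hr, -⟩ := hδ r
    rw [hr, tmul_add, add_tmul, mul_add, add_mul]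
    congr 1
    · rw [show ((1:R) ⊗ₜ ((p : R)) : R ⊗[s.fixedSubring] R) = (p : R) ⊗ₜ 1 by
        rw [tmul_coe, one_mul]]
      exact mul_comm _ _
    · have e1 : ((1:R) ⊗ₜ ((q : R) * δ) : R ⊗[s.fixedSubring] R)
          = ((q : R) ⊗ₜ (1:R)) * ((1:R) ⊗ₜ δ) := by
        rw [Algebra.TensorProduct.tmul_mul_tmul, mul_one, one_mul, tmul_coe_mul, mul_one]
      have e2 : (((q : R) * δ) ⊗ₜ (1:R) : R ⊗[s.fixedSubring] R)
          = ((q : R) ⊗ₜ (1:R)) * (δ ⊗ₜ (1:R)) := by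
        rw [Algebra.TensorProduct.tmul_mul_tmul, mul_one]
      rw [e1, e2, mul_left_comm, comm_delta, mul_assoc]

end Main


theorem twisted_mult_map_kernel_free_rank_one
    {R : Type*} [CommRing R] (s : RingAut R) (hs : ∀ r : R, s (s r) = r)
    (δ : R)
    (hδ : ∀ r : R, ∃! p : s.fixedSubring × s.fixedSubring, r = (p.1 : R) + (p.2 : R) * δ) :
    letI : Algebra s.fixedSubring R := s.fixedSubring.subtype.toAlgebra
    letI sA : R →ₐ[s.fixedSubring] R :=
      { toRingHom := (s : R ≃+* R).toRingHom, commutes' := fun c => c.2 }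
    letI ν : R ⊗[s.fixedSubring] R →ₐ[s.fixedSubring] R :=
      (Algebra.TensorProduct.lmul' s.fixedSubring).comp
        (Algebra.TensorProduct.map (AlgHom.id s.fixedSubring R) sA)
    letI η : R ⊗[s.fixedSubring] R := δ ⊗ₜ (1 : R) - (1 : R) ⊗ₜ (s δ)
    (∀ a b : R, ν (a ⊗ₜ b) = a * s b) ∧
    Function.Surjective ν ∧
    (∀ (r : R) (x : R ⊗[s.fixedSubring] R), ν ((r ⊗ₜ (1 : R)) * x) = r * ν x) ∧
    (∀ (r : R) (x : R ⊗[s.fixedSubring] R), ν (x * ((1 : R) ⊗ₜ r)) = s r * ν x) ∧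
    (∀ x : R ⊗[s.fixedSubring] R, ν x = 0 ↔ ∃ r : R, x = (r ⊗ₜ (1 : R)) * η) ∧
    (∀ r r' : R, (r ⊗ₜ (1 : R)) * η = (r' ⊗ₜ (1 : R)) * η → r = r') ∧
    (∀ r : R, η * ((1 : R) ⊗ₜ r) = (r ⊗ₜ (1 : R)) * η) := by
  exact main_aux s δ hs hδ
end

section
/- Let R be a commutative domain with field of fractions Q, let G be a group acting on R by ring automorphisms, and let F ⊆ G be a finite subset. Let M be an R-bimodule which is flat as a right R-module, and suppose the base change M ⊗_R Q (a left R-module and right Q-module) admits a direct sum decomposition M ⊗_R Q = ⊕_{w∈F} M_w into additive subgroups, each stable under the left R-action and the right Q-action, such that for every w ∈ F, n ∈ M_w and r ∈ R one has n·r = (w·r)·n. Then for every r ∈ R fixed by all elements of F and every m ∈ M, one has r·m = m·r; that is, the left and right actions of the fixed subring coincide on M. -/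
/-!
On each summand `M_w` of `Q ⊗[R] M`, the left action of an `F`-fixed `r` is multiplication
by `w • r = r`; since the summands span, the left action of `r` on all of `Q ⊗[R] M` is the
scalar `r`. Applying this to `1 ⊗ m` gives `1 ⊗ (r • m) = 1 ⊗ (m • r)`, and `m ↦ 1 ⊗ m` is
injective because `M` is flat and `R → Q` is injective.
-/

open TensorProduct

theorem LinearMap.ext_of_iSup_eq_top {ι S R V W : Type*} [Semiring S] [Semiring R]
    [AddCommMonoid V] [AddCommMonoid W] [Module S V] [Module R V] [Module R W]
    {N : ι → Submodule S V} (hN : ⨆ i, N i = ⊤) {f g : V →ₗ[R] W}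
    (h : ∀ i, ∀ x ∈ N i, f x = g x) : f = g := by
  ext x
  have hx : x ∈ ⨆ i, N i := hN ▸ Submodule.mem_top
  induction hx using Submodule.iSup_induction' with
  | mem i x hx => exact h i x hx
  | zero => rw [map_zero, map_zero]
  | add x y _ _ hx hy => rw [map_add, map_add, hx, hy]

theorem left_and_right_actions_agree_on_fixed_elements_general
    {R : Type*} [CommRing R]
    {G : Type*} [Group G] [MulSemiringAction G R] (F : Finset G)
    {M : Type*} [AddCommGroup M] [Module R M] [Module.Flat R M]
    (α : R →+* Module.End R M)
    (N : G → Submodule (FractionRing R) (FractionRing R ⊗[R] M))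
    (hint : letI := Classical.decEq G; DirectSum.IsInternal (fun w : F => N w))
    (hwt : ∀ w ∈ F, ∀ x ∈ N w, ∀ r : R,
      (algebraMap R (FractionRing R) r) • x = LinearMap.lTensor (FractionRing R) (α (w • r)) x) :
    ∀ r : R, (∀ w ∈ F, w • r = r) → ∀ m : M, α r m = r • m := by
  intro r hr m
  classical
  have hscalar : (α r).lTensor (FractionRing R) = r • LinearMap.id :=
    LinearMap.ext_of_iSup_eq_top hint.submodule_iSup_eq_top fun w x hx => by
      simpa [hr w w.2, algebraMap_smul] using (hwt w w.2 x hx r).symm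
  apply Module.Flat.tensorProduct_mk_injective R M (FractionRing R)
  simpa using LinearMap.congr_fun hscalar (1 ⊗ₜ m)

theorem left_and_right_actions_agree_on_fixed_elements
    {R : Type*} [CommRing R] [IsDomain R]
    {G : Type*} [Group G] [MulSemiringAction G R] (F : Finset G)
    {M : Type*} [AddCommGroup M] [Module R M] [Module.Flat R M]
    (α : R →+* Module.End R M)
    (N : G → Submodule (FractionRing R) (FractionRing R ⊗[R] M))
    (hstab : ∀ w ∈ F, ∀ r : R, ∀ x ∈ N w,
      LinearMap.lTensor (FractionRing R) (α r) x ∈ N w)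
    (hint : letI := Classical.decEq G; DirectSum.IsInternal (fun w : F => N w))
    (hwt : ∀ w ∈ F, ∀ x ∈ N w, ∀ r : R,
      (algebraMap R (FractionRing R) r) • x = LinearMap.lTensor (FractionRing R) (α (w • r)) x) :
    ∀ r : R, (∀ w ∈ F, w • r = r) → ∀ m : M, α r m = r • m :=
  left_and_right_actions_agree_on_fixed_elements_general F α N hint hwt
end

section
/- Let R be a noetherian commutative domain with field of fractions Q, let G be a group acting on R by ring automorphisms, and let F ⊆ G be a finite subset. Let M be an R-bimodule which is generated as an R-bimodule by finitely many elements, is flat as a right R-module, and whose base change M ⊗_R Q admits a direct sum decomposition M ⊗_R Q = ⊕_{w∈F} M_w into additive subgroups, each stable under the left R-action and the right Q-action, such that for every w ∈ F, n ∈ M_w and r ∈ R one has n·r = (w·r)·n. Then M is finitely generated as a left R-module and finitely generated as a right R-module. -/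
/-!
Embed `M` into `M ⊗_R Q` by `x ↦ 1 ⊗ x`, which is injective by flatness. Each of the finitely many
bimodule generators decomposes into finitely many weight vectors `y ∈ M_w`, and on a weight vector
the left action of `r` is the right action of `w⁻¹ • r`. Hence the right `R`-span and the left
`R`-span of these weight vectors coincide; this span is stable under both actions and contains the
generators, so it contains `M`. Being finitely generated on either side over the noetherian ring
`R`, it is noetherian on either side, and so is its submodule `M`.
-/

open TensorProduct Submodule
open scoped Pointwise

section Bimodule

variable {R : Type*} [CommRing R] {M V : Type*} [AddCommGroup M] [Module R M]
  [AddCommGroup V] [Module R V]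

/-- `M` as an `R`-module through a left action `α`, i.e. with `r • x = α r x`. -/
def LeftAct (_α : R →+* Module.End R M) : Type _ := M

namespace LeftAct

variable (α : R →+* Module.End R M) (β : R →+* Module.End R V)

instance : AddCommGroup (LeftAct α) := inferInstanceAs (AddCommGroup M)

instance : Module R (LeftAct α) := Module.compHom M α

def of : M ≃+ LeftAct α := AddEquiv.refl M

def map (f : M →ₗ[R] V) (hf : ∀ r x, f (α r x) = β r (f x)) : LeftAct α →ₗ[R] LeftAct β where
  toFun x := of β (f ((of α).symm x))
  map_add' x y := by simp
  map_smul' r x := hf r x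

theorem exists_finset_closure_eq_top [Module.Finite R (LeftAct α)] :
    ∃ t : Finset M, AddSubgroup.closure {y | ∃ r, ∃ x ∈ t, α r x = y} = ⊤ := by
  obtain ⟨t, ht⟩ := Module.finite_def.1 ‹Module.Finite R (LeftAct α)›
  refine ⟨t, eq_top_iff.2 fun m _ => ?_⟩
  have hm : of α m ∈ AddSubmonoid.closure ((Set.univ : Set R) • (t : Set (LeftAct α))) := by
    rw [← span_eq_closure, ht]
    exact mem_top
  refine AddSubmonoid.closure_le.2 ?_ hm
  rintro _ ⟨r, -, x, hx, rfl⟩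
  exact AddSubgroup.subset_closure ⟨r, x, hx, rfl⟩

end LeftAct

variable {β : R →+* Module.End R V}

/-- For `σ = (w • ·)` these are the elements of the piece `M_w`: `y • r = β (σ r) y`. -/
def IsWeightVector (β : R →+* Module.End R V) (σ : R ≃+* R) (y : V) : Prop :=
  ∀ r, β (σ r) y = r • y

theorem IsWeightVector.apply_eq_smul {σ : R ≃+* R} {y : V} (h : IsWeightVector β σ y) (r : R) :
    β r y = σ.symm r • y := by
  simpa using h (σ.symm r)

theorem apply_mem_span_of_forall_isWeightVector {S : Set V}
    (hS : ∀ y ∈ S, ∃ σ, IsWeightVector β σ y) (r : R) {x : V} (hx : x ∈ span R S) :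
    β r x ∈ span R S := by
  refine (span_le (p := (span R S).comap (β r)) |>.2 fun y hy => ?_) hx
  obtain ⟨σ, hσ⟩ := hS y hy
  rw [SetLike.mem_coe, mem_comap, hσ.apply_eq_smul]
  exact smul_mem _ _ (subset_span hy)

theorem LeftAct.of_smul_mem_span_of_forall_isWeightVector {S : Set V}
    (hS : ∀ y ∈ S, ∃ σ, IsWeightVector β σ y) (r : R) {x : V}
    (hx : of β x ∈ span R (of β '' S)) : of β (r • x) ∈ span R (of β '' S) := by
  let ρ := map β β (r • LinearMap.id) fun r' x => (map_smul (β r') r x).symm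
  refine (span_le (p := (span R (of β '' S)).comap ρ) |>.2 ?_) hx
  rintro _ ⟨y, hy, rfl⟩
  obtain ⟨σ, hσ⟩ := hS y hy
  show of β (r • y) ∈ span R (of β '' S)
  rw [← hσ r]
  exact smul_mem _ _ (subset_span ⟨y, hy, rfl⟩)

theorem LeftAct.of_mem_span_iff_of_forall_isWeightVector {S : Set V}
    (hS : ∀ y ∈ S, ∃ σ, IsWeightVector β σ y) {x : V} :
    of β x ∈ span R (of β '' S) ↔ x ∈ span R S := by
  refine ⟨fun hx => ?_, fun hx => ?_⟩
  · suffices ∀ z ∈ span R (of β '' S), (of β).symm z ∈ span R S from this _ hx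
    intro z hz
    induction hz using span_induction with
    | mem _ h => obtain ⟨y, hy, rfl⟩ := h; exact subset_span hy
    | zero => simp
    | add _ _ _ _ h h' => simpa using add_mem h h'
    | smul a z _ h => exact apply_mem_span_of_forall_isWeightVector hS a h
  · induction hx using span_induction with
    | mem y hy => exact subset_span ⟨y, hy, rfl⟩
    | zero => simp
    | add y z _ _ hy hz => simpa using add_mem hy hz
    | smul a y _ hy => exact of_smul_mem_span_of_forall_isWeightVector hS a hy

end Bimodule

theorem Module.Finite.of_injective_of_forall_mem_span {R M V : Type*} [Ring R]
    [IsNoetherianRing R] [AddCommGroup M] [Module R M] [AddCommGroup V] [Module R V]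
    {S : Set V} (hS : S.Finite) (f : M →ₗ[R] V) (hf : Function.Injective f)
    (h : ∀ x, f x ∈ span R S) : Module.Finite R M :=
  have := Module.Finite.span_of_finite R hS
  .of_injective (f.codRestrict _ h) fun _ _ hxy => hf (congrArg Subtype.val hxy)

theorem Submodule.exists_finite_subset_iUnion_of_subset_iSup {K R V ι : Type*} [Semiring K]
    [Semiring R] [AddCommMonoid V] [Module K V] [Module R V] [Finite ι] (p : ι → Submodule K V)
    {s : Set V} (hs : s.Finite) (hsp : s ⊆ (⨆ i, p i : Submodule K V)) :
    ∃ S : Set V, S.Finite ∧ S ⊆ ⋃ i, (p i : Set V) ∧ s ⊆ span R S := by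
  choose f hfp hf using fun x (hx : x ∈ s) => (mem_iSup_iff_exists_finsupp p x).1 (hsp hx)
  refine ⟨⋃ (x) (hx : x ∈ s), Set.range (f x hx), hs.biUnion' fun _ _ => Set.finite_range _,
    ?_, fun x hx => ?_⟩
  · simp only [Set.iUnion_subset_iff]
    rintro x hx _ ⟨i, rfl⟩
    exact Set.mem_iUnion.2 ⟨i, hfp x hx i⟩
  · rw [← hf x hx]
    exact sum_mem fun i _ => subset_span (Set.mem_iUnion₂.2 ⟨x, hx, i, rfl⟩)

theorem bimodule_fg_left_and_right_general
    {R : Type*} [CommRing R] [IsNoetherianRing R]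
    {G : Type*} [Group G] [MulSemiringAction G R] (F : Finset G)
    {M : Type*} [AddCommGroup M] [Module R M] [Module.Flat R M]
    (α : R →+* Module.End R M)
    (s : Finset M)
    (hgen : ∀ P : Submodule R M, (∀ r : R, ∀ x ∈ P, α r x ∈ P) → (↑s : Set M) ⊆ P → P = ⊤)
    (N : G → Submodule (FractionRing R) (FractionRing R ⊗[R] M))
    (hint : letI := Classical.decEq G; DirectSum.IsInternal (fun w : F => N w))
    (hwt : ∀ w ∈ F, ∀ x ∈ N w, ∀ r : R,
      (algebraMap R (FractionRing R) r) • x = LinearMap.lTensor (FractionRing R) (α (w • r)) x) :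
    (∃ t : Finset M, Submodule.span R (↑t : Set M) = ⊤) ∧
    (∃ t : Finset M, AddSubgroup.closure {y : M | ∃ r : R, ∃ x ∈ t, α r x = y} = ⊤) := by
  let ι : M →ₗ[R] FractionRing R ⊗[R] M := TensorProduct.mk R (FractionRing R) M 1
  have hι : Function.Injective ι := by
    have := (Module.Flat.rTensor_preserves_injective_linearMap (M := M)
      (Algebra.linearMap R (FractionRing R)) (IsFractionRing.injective R (FractionRing R))).comp
      (TensorProduct.lid R M).symm.injective
    convert this using 1
    ext x
    simp [ι]
  let β : R →+* Module.End R (FractionRing R ⊗[R] M) :=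
    (Module.End.lTensorAlgHom R M (FractionRing R)).toRingHom.comp α
  have hιβ : ∀ r x, ι (α r x) = β r (ι x) := fun _ _ => rfl
  obtain ⟨S, hSfin, hSN, hsS⟩ := exists_finite_subset_iUnion_of_subset_iSup (R := R)
    (fun w : F => N w) (s.finite_toSet.image ι)
    (by let := Classical.decEq G; rw [hint.submodule_iSup_eq_top]; exact le_top)
  have hS : ∀ y ∈ S, ∃ σ, IsWeightVector β σ y := by
    intro y hy
    obtain ⟨w, hw⟩ := Set.mem_iUnion.1 (hSN hy)
    exact ⟨MulSemiringAction.toRingEquiv G R w, fun r => by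
      rw [← algebraMap_smul (FractionRing R) r y, hwt w w.2 y hw r]; rfl⟩
  have hM : ∀ x, ι x ∈ span R S := by
    have := hgen ((span R S).comap ι)
      (fun r x hx => by simpa [hιβ] using apply_mem_span_of_forall_isWeightVector hS r hx)
      (fun x hx => hsS ⟨x, hx, rfl⟩)
    exact fun x => eq_top_iff'.1 this x
  have : Module.Finite R M := .of_injective_of_forall_mem_span hSfin ι hι hM
  have : Module.Finite R (LeftAct α) := .of_injective_of_forall_mem_span
    (hSfin.image (LeftAct.of β)) (LeftAct.map α β ι hιβ) hι
    fun x => (LeftAct.of_mem_span_iff_of_forall_isWeightVector hS).2 (hM x)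
  exact ⟨Module.finite_def.1 ‹_›, LeftAct.exists_finset_closure_eq_top α⟩

theorem bimodule_fg_left_and_right
    {R : Type*} [CommRing R] [IsDomain R] [IsNoetherianRing R]
    {G : Type*} [Group G] [MulSemiringAction G R] (F : Finset G)
    {M : Type*} [AddCommGroup M] [Module R M] [Module.Flat R M]
    (α : R →+* Module.End R M)
    (s : Finset M)
    (hgen : ∀ P : Submodule R M, (∀ r : R, ∀ x ∈ P, α r x ∈ P) → (↑s : Set M) ⊆ P → P = ⊤)
    (N : G → Submodule (FractionRing R) (FractionRing R ⊗[R] M))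
    (hstab : ∀ w ∈ F, ∀ r : R, ∀ x ∈ N w,
      LinearMap.lTensor (FractionRing R) (α r) x ∈ N w)
    (hint : letI := Classical.decEq G; DirectSum.IsInternal (fun w : F => N w))
    (hwt : ∀ w ∈ F, ∀ x ∈ N w, ∀ r : R,
      (algebraMap R (FractionRing R) r) • x = LinearMap.lTensor (FractionRing R) (α (w • r)) x) :
    (∃ t : Finset M, Submodule.span R (↑t : Set M) = ⊤) ∧
    (∃ t : Finset M, AddSubgroup.closure {y : M | ∃ r : R, ∃ x ∈ t, α r x = y} = ⊤) :=
  bimodule_fg_left_and_right_general F α s hgen N hint hwt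
end
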